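/- For the sigmoid s(x) = 1/(1+e^{-λx}) with λ > 0 and any d > 0 and n ≥ 2: if s(-γ d) = 1/n^8 for some γ > 0, then for any ε ∈ (0,1], s(-εγd/10) ≥ (1/e) · (1/n^8)^{ε/5}. (Lower bound on the noise probability at a scaled-down deficit.) -/

import Mathlib

/-! With `t = λγd`, the critical equation says `1 + exp t = n^8`, and the claim becomes
`1 + exp (ε t / 10) ≤ e · (1 + exp t)^(ε/5)`. Here `exp (ε t / 10) = (exp t)^(ε/10)` is at most
`X = (1 + exp t)^(ε/5)`, and `1 + X ≤ 2X ≤ e X` because `X ≥ 1`. -/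

open Real

lemma exp_mul_le_one_add_exp_rpow (t : ℝ) {a : ℝ} (ha : 0 ≤ a) :
    exp (a * t) ≤ (1 + exp t) ^ a :=
  calc exp (a * t) = exp t ^ a := by rw [← exp_mul, mul_comm]
    _ ≤ (1 + exp t) ^ a := rpow_le_rpow (exp_pos t).le (by linarith) ha

lemma one_add_le_exp_one_mul {x : ℝ} (hx : 1 ≤ x) : 1 + x ≤ exp 1 * x := by
  nlinarith [add_one_le_exp 1]

lemma one_add_exp_mul_le (t : ℝ) {a : ℝ} (ha : 0 ≤ a) :
    1 + exp (a * t) ≤ exp 1 * (1 + exp t) ^ (2 * a) := by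
  have hbase : 1 ≤ 1 + exp t := by linarith [exp_pos t]
  calc 1 + exp (a * t) ≤ 1 + (1 + exp t) ^ (2 * a) := by
        gcongr
        exact (exp_mul_le_one_add_exp_rpow t ha).trans
          (rpow_le_rpow_of_exponent_le hbase (by linarith))
    _ ≤ exp 1 * (1 + exp t) ^ (2 * a) :=
        one_add_le_exp_one_mul (one_le_rpow hbase (by linarith))

lemma inv_exp_one_mul_rpow_le_logistic (t : ℝ) {a : ℝ} (ha : 0 ≤ a) :
    1 / exp 1 * (1 / (1 + exp t)) ^ (2 * a) ≤ 1 / (1 + exp (a * t)) := by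
  rw [div_rpow zero_le_one (by positivity), one_rpow, one_div_mul_one_div]
  exact one_div_le_one_div_of_le (by positivity) (one_add_exp_mul_le t ha)

theorem sigmoid_scaled_noise_lower_bound_general (lam : ℝ)
    (s : ℝ → ℝ) (hs : ∀ x, s x = 1 / (1 + Real.exp (-lam * x)))
    (d : ℝ) (n : ℕ)
    (γ : ℝ) (hcrit : s (-(γ * d)) = 1 / (n : ℝ) ^ 8)
    (ε : ℝ) (hε0 : 0 < ε) :
    (1 / Real.exp 1) * (1 / (n : ℝ) ^ 8) ^ (ε / 5) ≤ s (-(ε * γ * d / 10)) := by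
  rw [hs, ← hcrit, hs]
  have h := inv_exp_one_mul_rpow_le_logistic (lam * (γ * d)) (a := ε / 10) (by positivity)
  convert h using 3 <;> ring_nf

/-- If `s(-γ d) = 1/n^8` then for any `ε ∈ (0,1]`,
`s(-ε γ d / 10) ≥ (1/e) * (1/n^8)^(ε/5)`. -/
theorem sigmoid_scaled_noise_lower_bound (lam : ℝ) (hlam : 0 < lam)
    (s : ℝ → ℝ) (hs : ∀ x, s x = 1 / (1 + Real.exp (-lam * x)))
    (d : ℝ) (hd : 0 < d) (n : ℕ) (hn : 2 ≤ n)
    (γ : ℝ) (hγ : 0 < γ) (hcrit : s (-(γ * d)) = 1 / (n : ℝ) ^ 8)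
    (ε : ℝ) (hε0 : 0 < ε) (hε1 : ε ≤ 1) :
    (1 / Real.exp 1) * (1 / (n : ℝ) ^ 8) ^ (ε / 5) ≤ s (-(ε * γ * d / 10)) :=
  sigmoid_scaled_noise_lower_bound_general lam s hs d n γ hcrit ε hε0
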